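/- arXiv:math/0604062 — 2 statements merged into one kernel-verified Lean document; each statement's English description precedes it below -/
import Mathlib

section
/- Let N be a closed normal subgroup of a topological group G such that both N and G/N are p-adic Lie groups (for the same prime p) and G is totally disconnected and locally compact. Then G is a p-adic Lie group. -/
/-- A topological group is a pro-`p` group of finite rank if every open normal
subgroup has index a power of `p`, and there is `r` such that every closed
subgroup is topologically generated by at most `r` elements. -/
def IsProPOfFiniteRank (p : ℕ) (K : Type*) [Group K] [TopologicalSpace K]
    [IsTopologicalGroup K] : Prop :=
  (∀ O : Subgroup K, IsOpen (O : Set K) → O.Normal → ∃ k : ℕ, O.index = p ^ k) ∧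
  ∃ r : ℕ, ∀ Hc : Subgroup K, IsClosed (Hc : Set K) →
    ∃ s : Finset K, s.card ≤ r ∧
      (Subgroup.closure (s : Set K)).topologicalClosure = Hc

/-- A topological group is a `p`-adic Lie group if it has a compact open
subgroup which is a pro-`p` group of finite rank. -/
def IsPadicLieGroup (p : ℕ) (G : Type*) [Group G] [TopologicalSpace G]
    [IsTopologicalGroup G] : Prop :=
  ∃ U : Subgroup G, IsOpen (U : Set G) ∧ IsCompact (U : Set G) ∧
    IsProPOfFiniteRank p U

section Helpers

open Set Filter Topology
open scoped Pointwise

section VanDantzig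

variable {G : Type*} [Group G] [TopologicalSpace G] [IsTopologicalGroup G]

lemma my_exist_mul_closure_nhd {W : Set G} (Wcpt : IsCompact W) (WClopen : IsClopen W) :
    ∃ T ∈ 𝓝 (1 : G), W * T ⊆ W := by
  apply Wcpt.induction_on (p := fun S ↦ ∃ T ∈ 𝓝 (1 : G), S * T ⊆ W)
    ⟨Set.univ, by simp only [univ_mem, empty_mul, empty_subset, and_self]⟩
    (fun _ _ huv ⟨T, hT, mem⟩ ↦ ⟨T, hT, (mul_subset_mul_right huv).trans mem⟩)
    fun U V ⟨T₁, hT₁, mem1⟩ ⟨T₂, hT₂, mem2⟩ ↦ ⟨T₁ ∩ T₂, inter_mem hT₁ hT₂, by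
      rw [union_mul]
      exact union_subset (mul_subset_mul_left inter_subset_left |>.trans mem1)
        (mul_subset_mul_left inter_subset_right |>.trans mem2)⟩
  intro x memW
  have : (x, 1) ∈ (fun p ↦ p.1 * p.2) ⁻¹' W := by simp [memW]
  rcases isOpen_prod_iff.mp (continuous_mul.isOpen_preimage W <| WClopen.2) x 1 this with
    ⟨U, V, Uopen, Vopen, xmemU, onememV, prodsub⟩
  have h6 : U * V ⊆ W := mul_subset_iff.mpr (fun _ hx _ hy ↦ prodsub (mk_mem_prod hx hy))
  exact ⟨U ∩ W, ⟨U, Uopen.mem_nhds xmemU, W, fun _ a ↦ a, rfl⟩,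
    V, IsOpen.mem_nhds Vopen onememV, fun _ a ↦ h6 ((mul_subset_mul_right inter_subset_left) a)⟩

lemma my_exists_compactOpen_sub {W : Set G} (Wcpt : IsCompact W) (WClopen : IsClopen W)
    (einW : (1 : G) ∈ W) :
    ∃ S : Subgroup G, IsOpen (S : Set G) ∧ IsCompact (S : Set G) ∧ (S : Set G) ⊆ W := by
  obtain ⟨S', Smemnhds, mulclose⟩ := my_exist_mul_closure_nhd Wcpt WClopen
  obtain ⟨U, UsubS, Uopen, onememU⟩ := mem_nhds_iff.mp Smemnhds
  have hV : IsTopologicalGroup.mulInvClosureNhd (U ∩ U⁻¹) W := by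
    constructor
    · simp [Uopen.mem_nhds onememU, inv_mem_nhds_one]
    · simp [inter_comm]
    · exact Uopen.inter Uopen.inv
    · exact fun a ha ↦ mulclose (mul_subset_mul_left UsubS
        (mul_subset_mul_left inter_subset_left ha))
  set V : Set G := U ∩ U⁻¹ with hVdef
  let S : Subgroup G := {
    carrier := ⋃ n, V ^ (n + 1)
    mul_mem' := fun ha hb ↦ by
      rcases mem_iUnion.mp ha with ⟨k, hk⟩
      rcases mem_iUnion.mp hb with ⟨l, hl⟩
      apply mem_iUnion.mpr
      use k + 1 + l
      rw [add_assoc, pow_add]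
      exact Set.mul_mem_mul hk hl
    one_mem' := by
      apply mem_iUnion.mpr
      use 0
      simp [mem_of_mem_nhds hV.nhds]
    inv_mem' := fun ha ↦ by
      rcases mem_iUnion.mp ha with ⟨k, hk⟩
      apply mem_iUnion.mpr
      use k
      rw [← hV.inv]
      simpa only [inv_pow, Set.mem_inv, inv_inv] using hk }
  have Sopen : IsOpen (⋃ n, V ^ (n + 1)) := by
    refine isOpen_iUnion (fun n ↦ ?_)
    rw [pow_succ]
    exact hV.isOpen.mul_left
  have mulVpow (n : ℕ) : W * V ^ (n + 1) ⊆ W := by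
    induction' n with n ih
    · simp [hV.mul]
    · rw [pow_succ, ← mul_assoc]
      exact (Set.mul_subset_mul_right ih).trans hV.mul
  have subW : (S : Set G) ⊆ W := by
    refine iUnion_subset fun i a hai ↦ mulVpow i ?_
    rw [Set.mem_mul]
    exact ⟨1, einW, a, hai, one_mul a⟩
  have Sclosed : IsClosed (S : Set G) := (⟨S, Sopen⟩ : OpenSubgroup G).isClosed
  exact ⟨S, Sopen, Wcpt.of_isClosed_subset Sclosed subW, subW⟩

lemma vanDantzig [LocallyCompactSpace G] [T2Space G] [TotallyDisconnectedSpace G]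
    {O : Set G} (hO : IsOpen O) (h1 : (1 : G) ∈ O) :
    ∃ S : Subgroup G, IsOpen (S : Set G) ∧ IsCompact (S : Set G) ∧ (S : Set G) ⊆ O := by
  obtain ⟨C, Ccpt, hC1, hCO⟩ := exists_compact_subset hO h1
  obtain ⟨Vs, hVclopen, h1V, hVsub⟩ := (loc_compact_Haus_tot_disc_of_zero_dim).mem_nhds_iff.mp
    (mem_interior_iff_mem_nhds.mp hC1)
  have Vcpt : IsCompact Vs := Ccpt.of_isClosed_subset hVclopen.isClosed hVsub
  obtain ⟨S, hSo, hSc, hSsub⟩ := my_exists_compactOpen_sub Vcpt hVclopen h1V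
  exact ⟨S, hSo, hSc, hSsub.trans (hVsub.trans hCO)⟩

end VanDantzig

section QuotientTD

variable {G : Type*} [Group G] [TopologicalSpace G] [IsTopologicalGroup G]

lemma quotient_totallyDisconnected [LocallyCompactSpace G] [T2Space G]
    [TotallyDisconnectedSpace G] (N : Subgroup G) [N.Normal] (hNc : IsClosed (N : Set G)) :
    TotallyDisconnectedSpace (G ⧸ N) := by
  have hts : TotallySeparatedSpace (G ⧸ N) := by
    constructor
    intro a _ b _ hab
    obtain ⟨g, hg⟩ := QuotientGroup.mk_surjective (a⁻¹ * b)
    have hgN : g ∉ N := by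
      intro h
      apply hab
      have : a⁻¹ * b = 1 := by rw [← hg, QuotientGroup.eq_one_iff]; exact h
      calc a = a * (a⁻¹ * b) := by rw [this, mul_one]
        _ = b := by group
    have hclosed : IsClosed (g • (N : Set G)) := hNc.smul g
    have h1mem : (1 : G) ∈ (g • (N : Set G))ᶜ := by
      intro h
      rw [Set.mem_smul_set_iff_inv_smul_mem] at h
      exact hgN (by simpa [smul_eq_mul] using (inv_mem h))
    obtain ⟨S, hSo, _, hSsub⟩ := vanDantzig hclosed.isOpen_compl h1mem
    set D : Subgroup (G ⧸ N) := S.map (QuotientGroup.mk' N) with hD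
    have hDopen : IsOpen (D : Set (G ⧸ N)) := by
      rw [hD, Subgroup.coe_map, QuotientGroup.coe_mk']
      exact QuotientGroup.isOpenMap_coe _ hSo
    have hDclosed : IsClosed (D : Set (G ⧸ N)) := (⟨D, hDopen⟩ : OpenSubgroup _).isClosed
    have hbmem : b ∉ a • (D : Set (G ⧸ N)) := by
      intro hb
      rw [mem_leftCoset_iff] at hb
      have : a⁻¹ * b ∈ D := hb
      rw [← hg] at this
      obtain ⟨x, hxS, hx⟩ := this
      have : x ∈ g • (N : Set G) := by
        rw [Set.mem_smul_set_iff_inv_smul_mem]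
        have hxg : x⁻¹ * g ∈ N := by
          rw [← QuotientGroup.eq]
          exact hx
        simpa [smul_eq_mul, mul_inv_rev] using inv_mem hxg
      exact hSsub hxS this
    refine ⟨a • (D : Set (G ⧸ N)), (a • (D : Set (G ⧸ N)))ᶜ, hDopen.smul a,
      hDclosed.smul a |>.isOpen_compl, ?_, hbmem, ?_, disjoint_compl_right⟩
    · exact ⟨1, D.one_mem, by simp⟩
    · intro x _
      by_cases hx : x ∈ a • (D : Set (G ⧸ N))
      · exact Or.inl hx
      · exact Or.inr hx
  exact TotallySeparatedSpace.totallyDisconnectedSpace (G ⧸ N)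

end QuotientTD
section Pullback

variable {p : ℕ} {K L : Type*} [Group K] [TopologicalSpace K] [IsTopologicalGroup K]
  [Group L] [TopologicalSpace L] [IsTopologicalGroup L]

lemma prop_comap [CompactSpace K] [T2Space K] [TotallyDisconnectedSpace K] [CompactSpace L]
    (hp : p.Prime) (hK : IsProPOfFiniteRank p K)
    (f : L →* K) (hfc : Continuous f) (hfi : Function.Injective f) :
    IsProPOfFiniteRank p L := by
  classical
  have hemb : IsClosedEmbedding f := hfc.isClosedEmbedding hfi
  constructor
  · intro O hOopen hOn
    obtain ⟨U, hUopen, hUpre⟩ := hemb.isInducing.isOpen_iff.mp hOopen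
    have h1U : (1 : K) ∈ U := by
      have h1O : (1 : L) ∈ ⇑f ⁻¹' U := by rw [hUpre]; exact O.one_mem
      simpa using h1O
    obtain ⟨Wc, hWclopen, h1W, hWU⟩ := compact_exists_isClopen_in_isOpen hUopen h1U
    obtain ⟨Ω, hΩW⟩ := IsTopologicalGroup.exist_openNormalSubgroup_sub_clopen_nhds_of_one hWclopen h1W
    obtain ⟨k, hk⟩ := hK.1 Ω.toSubgroup Ω.toOpenSubgroup.isOpen Ω.isNormal'
    have hle : (Ω.toSubgroup).comap f ≤ O := by
      intro x hx
      have hfx : x ∈ ⇑f ⁻¹' U := hWU (hΩW hx)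
      rw [hUpre] at hfx
      exact hfx
    have hdvd : O.index ∣ p ^ k := by
      calc O.index ∣ ((Ω.toSubgroup).comap f).index := Subgroup.index_dvd_of_le hle
        _ = (Ω.toSubgroup).relIndex f.range := Subgroup.index_comap _ f
        _ ∣ (Ω.toSubgroup).index := by
            haveI := Ω.isNormal'
            exact Subgroup.relIndex_dvd_index_of_normal _ _
        _ = p ^ k := hk
    obtain ⟨j, _, hj⟩ := (Nat.dvd_prime_pow hp).mp hdvd
    exact ⟨j, hj⟩
  · obtain ⟨r, hr⟩ := hK.2
    refine ⟨r, fun Hc hHc => ?_⟩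
    have hHcK : IsClosed ((Hc.map f : Subgroup K) : Set K) := by
      rw [Subgroup.coe_map]
      exact ((hHc.isCompact).image hfc).isClosed
    obtain ⟨s, hsc, hs⟩ := hr _ hHcK
    have hsub : ∀ x ∈ s, ∃ l, l ∈ Hc ∧ f l = x := by
      intro x hx
      have : x ∈ Hc.map f := by
        rw [← hs]
        exact Subgroup.le_topologicalClosure _ (Subgroup.subset_closure hx)
      obtain ⟨l, hl, hlf⟩ := this
      exact ⟨l, hl, hlf⟩
    let φ : K → L := fun x => if h : ∃ l, l ∈ Hc ∧ f l = x then h.choose else 1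
    have hφ : ∀ x ∈ s, φ x ∈ Hc ∧ f (φ x) = x := by
      intro x hx
      have hex := hsub x hx
      simp only [φ, dif_pos hex]
      exact ⟨hex.choose_spec.1, hex.choose_spec.2⟩
    refine ⟨s.image φ, (Finset.card_image_le).trans hsc, ?_⟩
    apply le_antisymm
    · apply Subgroup.topologicalClosure_minimal _ _ hHc
      rw [Subgroup.closure_le]
      intro y hy
      rw [Finset.coe_image] at hy
      obtain ⟨x, hx, rfl⟩ := hy
      exact (hφ x hx).1
    · intro h hh
      have h1 : f h ∈ closure ((Subgroup.closure (s : Set K) : Subgroup K) : Set K) := by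
        have : f h ∈ Hc.map f := ⟨h, hh, rfl⟩
        rw [← hs] at this
        rwa [← SetLike.mem_coe, Subgroup.topologicalClosure_coe] at this
      have key : ((Subgroup.closure (s : Set K) : Subgroup K) : Set K)
          ⊆ f '' ((Subgroup.closure ((s.image φ : Finset L) : Set L) : Subgroup L) : Set L) := by
        rw [← Subgroup.coe_map, MonoidHom.map_closure]
        apply SetLike.coe_subset_coe.mpr
        apply Subgroup.closure_mono
        intro x hx
        refine ⟨φ x, ?_, (hφ x hx).2⟩
        rw [Finset.coe_image]
        exact ⟨x, hx, rfl⟩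
      have h2 : f h ∈ closure (f '' ((Subgroup.closure ((s.image φ : Finset L) : Set L) :
          Subgroup L) : Set L)) := closure_mono key h1
      rw [hemb.closure_image_eq] at h2
      obtain ⟨l, hl, hlf⟩ := h2
      rw [← SetLike.mem_coe, Subgroup.topologicalClosure_coe]
      exact hfi hlf ▸ hl

end Pullback

section Extension

variable {p : ℕ} {K : Type*} [Group K] [TopologicalSpace K] [IsTopologicalGroup K]
  [CompactSpace K]

lemma prop_extension (M : Subgroup K) [M.Normal] (hMc : IsClosed (M : Set K))
    (hM : IsProPOfFiniteRank p M) (hQ : IsProPOfFiniteRank p (K ⧸ M)) :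
    IsProPOfFiniteRank p K := by
  classical
  haveI : IsClosed (M : Set K) := hMc
  constructor
  · intro O hOopen hOn
    haveI := hOn
    haveI hinf : (O ⊓ M).Normal := Subgroup.normal_inf_normal O M
    have hsubset_open : IsOpen (((O ⊓ M).subgroupOf M : Subgroup M) : Set M) := by
      have hset : (((O ⊓ M).subgroupOf M : Subgroup M) : Set M)
          = Subtype.val ⁻¹' (O : Set K) := by
        ext x
        simp only [SetLike.mem_coe, Subgroup.mem_subgroupOf, Subgroup.mem_inf, Set.mem_preimage]
        exact ⟨fun h => h.1, fun h => ⟨h, x.2⟩⟩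
      rw [hset]
      exact hOopen.preimage continuous_subtype_val
    haveI := hinf.subgroupOf M
    obtain ⟨k2, hk2⟩ := hM.1 _ hsubset_open inferInstance
    have hsupopen : IsOpen ((O ⊔ M : Subgroup K) : Set K) :=
      Subgroup.isOpen_mono le_sup_left hOopen
    have himgopen : IsOpen (((O ⊔ M).map (QuotientGroup.mk' M) : Subgroup (K ⧸ M)) :
        Set (K ⧸ M)) := by
      rw [Subgroup.coe_map, QuotientGroup.coe_mk']
      exact QuotientGroup.isOpenMap_coe _ hsupopen
    haveI hsupn : (O ⊔ M : Subgroup K).Normal := Subgroup.sup_normal O M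
    have himgnormal : ((O ⊔ M).map (QuotientGroup.mk' M)).Normal :=
      hsupn.map _ (QuotientGroup.mk'_surjective M)
    obtain ⟨k1, hk1⟩ := hQ.1 _ himgopen himgnormal
    refine ⟨k2 + k1, ?_⟩
    have e1 : O.relIndex (O ⊔ M) * (O ⊔ M).index = O.index :=
      Subgroup.relIndex_mul_index le_sup_left
    have e2 : (O ⊔ M).index = ((O ⊔ M).map (QuotientGroup.mk' M)).index :=
      (Subgroup.index_map_eq _ (QuotientGroup.mk'_surjective M)
        (by rw [QuotientGroup.ker_mk']; exact le_sup_right)).symm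
    have e3 : O.relIndex (O ⊔ M) = ((O ⊓ M).subgroupOf M).index := by
      rw [Subgroup.relIndex_sup_left, ← Subgroup.inf_relIndex_right]
      rfl
    rw [← e1, e2, e3, hk1, hk2, pow_add]
  · obtain ⟨rN, hrN⟩ := hM.2
    obtain ⟨rQ, hrQ⟩ := hQ.2
    refine ⟨rN + rQ, fun Hc hHc => ?_⟩
    have hHcCompact : IsCompact (Hc : Set K) := hHc.isCompact
    have hA'c : IsClosed (((Hc ⊓ M).subgroupOf M : Subgroup M) : Set M) := by
      have hset : (((Hc ⊓ M).subgroupOf M : Subgroup M) : Set M)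
          = Subtype.val ⁻¹' (Hc : Set K) := by
        ext x
        simp only [SetLike.mem_coe, Subgroup.mem_subgroupOf, Subgroup.mem_inf, Set.mem_preimage]
        exact ⟨fun h => h.1, fun h => ⟨h, x.2⟩⟩
      rw [hset]
      exact hHc.preimage continuous_subtype_val
    obtain ⟨s₁, hs₁c, hs₁⟩ := hrN _ hA'c
    have hB'c : IsClosed ((Hc.map (QuotientGroup.mk' M) : Subgroup (K ⧸ M)) : Set (K ⧸ M)) := by
      rw [Subgroup.coe_map, QuotientGroup.coe_mk']
      exact (hHcCompact.image QuotientGroup.continuous_mk).isClosed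
    obtain ⟨s₂', hs₂c, hs₂⟩ := hrQ _ hB'c
    let φ : K ⧸ M → K := fun x =>
      if h : ∃ g, g ∈ Hc ∧ (QuotientGroup.mk' M) g = x then h.choose else 1
    have hφ : ∀ x ∈ s₂', φ x ∈ Hc ∧ (QuotientGroup.mk' M) (φ x) = x := by
      intro x hx
      have hxB : x ∈ Hc.map (QuotientGroup.mk' M) := by
        rw [← hs₂]
        exact Subgroup.le_topologicalClosure _ (Subgroup.subset_closure hx)
      obtain ⟨g, hg, hgx⟩ := hxB
      have hex : ∃ g, g ∈ Hc ∧ (QuotientGroup.mk' M) g = x := ⟨g, hg, hgx⟩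
      simp only [φ, dif_pos hex]
      exact ⟨hex.choose_spec.1, hex.choose_spec.2⟩
    set s : Finset K := s₁.image M.subtype ∪ s₂'.image φ with hsdef
    have hsHc : (s : Set K) ⊆ (Hc : Set K) := by
      intro x hx
      rw [hsdef] at hx
      simp only [Finset.coe_union, Finset.coe_image, Set.mem_union, Set.mem_image,
        Finset.mem_coe] at hx
      rcases hx with ⟨m, hm, rfl⟩ | ⟨y, hy, rfl⟩
      · have : m ∈ ((Hc ⊓ M).subgroupOf M : Subgroup M) := by
          rw [← hs₁]
          exact Subgroup.le_topologicalClosure _ (Subgroup.subset_closure hm)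
        rw [Subgroup.mem_subgroupOf] at this
        exact this.1
      · exact (hφ y hy).1
    refine ⟨s, ?_, ?_⟩
    · calc s.card ≤ (s₁.image M.subtype).card + (s₂'.image φ).card := Finset.card_union_le _ _
        _ ≤ rN + rQ := Nat.add_le_add ((Finset.card_image_le).trans hs₁c)
            ((Finset.card_image_le).trans hs₂c)
    set C : Subgroup K := (Subgroup.closure (s : Set K)).topologicalClosure with hCdef
    have hCle : C ≤ Hc :=
      Subgroup.topologicalClosure_minimal _ (Subgroup.closure_le _ |>.mpr hsHc) hHc
    have hCcl : IsClosed (C : Set K) := Subgroup.isClosed_topologicalClosure _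
    have hstep1 : ∀ y : K, y ∈ Hc → y ∈ M → y ∈ C := by
      intro y hy hyM
      have hymem : (⟨y, hyM⟩ : M) ∈ ((Hc ⊓ M).subgroupOf M : Subgroup M) := by
        rw [Subgroup.mem_subgroupOf]
        exact ⟨hy, hyM⟩
      rw [← hs₁, ← SetLike.mem_coe, Subgroup.topologicalClosure_coe] at hymem
      have h4 : y ∈ closure (Subtype.val ''
          ((Subgroup.closure ((s₁ : Finset M) : Set M) : Subgroup M) : Set M)) :=
        image_closure_subset_closure_image continuous_subtype_val ⟨_, hymem, rfl⟩
      have h5 : Subtype.val '' ((Subgroup.closure ((s₁ : Finset M) : Set M) : Subgroup M) : Set M)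
          ⊆ ((Subgroup.closure (s : Set K) : Subgroup K) : Set K) := by
        have : Subtype.val '' ((Subgroup.closure ((s₁ : Finset M) : Set M) : Subgroup M) : Set M)
            = (((Subgroup.closure ((s₁ : Finset M) : Set M)).map M.subtype : Subgroup K) :
              Set K) := by
          rw [Subgroup.coe_map, Subgroup.coe_subtype]
        rw [this, MonoidHom.map_closure]
        apply SetLike.coe_subset_coe.mpr
        apply Subgroup.closure_mono
        intro z hz
        obtain ⟨m, hm, rfl⟩ := hz
        rw [hsdef]
        simp only [Finset.coe_union, Finset.coe_image, Set.mem_union, Set.mem_image,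
          Finset.mem_coe]
        exact Or.inl ⟨m, hm, rfl⟩
      have h6 : y ∈ closure ((Subgroup.closure (s : Set K) : Subgroup K) : Set K) :=
        closure_mono h5 h4
      rw [← Subgroup.topologicalClosure_coe, SetLike.mem_coe] at h6
      exact h6
    have hmapB : Hc.map (QuotientGroup.mk' M) ≤ C.map (QuotientGroup.mk' M) := by
      rw [← hs₂]
      apply Subgroup.topologicalClosure_minimal
      · rw [Subgroup.closure_le]
        intro x hx
        refine ⟨φ x, ?_, (hφ x hx).2⟩
        apply Subgroup.le_topologicalClosure
        apply Subgroup.subset_closure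
        rw [hsdef]
        simp only [Finset.coe_union, Finset.coe_image, Set.mem_union, Set.mem_image,
          Finset.mem_coe]
        exact Or.inr ⟨x, hx, rfl⟩
      · rw [Subgroup.coe_map, QuotientGroup.coe_mk']
        exact ((hCcl.isCompact).image QuotientGroup.continuous_mk).isClosed
    apply le_antisymm hCle
    intro h hh
    have hmem : QuotientGroup.mk' M h ∈ C.map (QuotientGroup.mk' M) := hmapB ⟨h, hh, rfl⟩
    obtain ⟨c, hc, hceq⟩ := hmem
    have hcM : c⁻¹ * h ∈ M := by
      rw [← QuotientGroup.eq]
      exact hceq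
    have hchHc : c⁻¹ * h ∈ Hc := mul_mem (inv_mem (hCle hc)) hh
    have hfin : c * (c⁻¹ * h) ∈ C := mul_mem hc (hstep1 _ hchHc hcM)
    simpa [mul_inv_cancel_left] using hfin

end Extension

end Helpers

/-- If `N` is a closed normal subgroup of a totally disconnected locally
compact group `G` such that `N` and `G/N` are `p`-adic Lie groups, then `G`
is a `p`-adic Lie group. -/
theorem stmt18 (p : ℕ) (hp : p.Prime) (G : Type*)
    [Group G] [TopologicalSpace G] [IsTopologicalGroup G]
    [LocallyCompactSpace G] [T2Space G] [TotallyDisconnectedSpace G]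
    (N : Subgroup G) [N.Normal] (hNclosed : IsClosed (N : Set G))
    (hN : IsPadicLieGroup p N)
    (hQ : IsPadicLieGroup p (G ⧸ N)) :
    IsPadicLieGroup p G := by
  classical
  obtain ⟨U₀, hU₀open, hU₀cpt, hU₀prop⟩ := hN
  obtain ⟨V, hVopen, hVcpt, hVprop⟩ := hQ
  haveI : IsClosed (N : Set G) := hNclosed
  haveI : TotallyDisconnectedSpace (G ⧸ N) := quotient_totallyDisconnected N hNclosed
  obtain ⟨O₀, hO₀open, hO₀pre⟩ := isOpen_induced_iff.mp hU₀open
  set P : Subgroup G := V.comap (QuotientGroup.mk' N) with hPdef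
  have hPopen : IsOpen (P : Set G) := by
    rw [hPdef, Subgroup.coe_comap, QuotientGroup.coe_mk']
    exact hVopen.preimage QuotientGroup.continuous_mk
  have h1mem : (1 : G) ∈ O₀ ∩ (P : Set G) := by
    constructor
    · have : ((1 : ↥N) : G) ∈ O₀ := by
        have h1U₀ : (1 : ↥N) ∈ Subtype.val ⁻¹' O₀ := by rw [hO₀pre]; exact U₀.one_mem
        exact h1U₀
      simpa using this
    · exact P.one_mem
  obtain ⟨W, hWopen, hWcpt, hWsub⟩ := vanDantzig (hO₀open.inter hPopen) h1mem
  refine ⟨W, hWopen, hWcpt, ?_⟩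
  haveI : CompactSpace ↥W := isCompact_iff_compactSpace.mp hWcpt
  set M : Subgroup ↥W := N.subgroupOf W with hMdef
  have hMc : IsClosed (M : Set ↥W) := by
    have hset : (M : Set ↥W) = Subtype.val ⁻¹' (N : Set G) := by
      ext x
      simp [hMdef, Subgroup.mem_subgroupOf]
    rw [hset]
    exact hNclosed.preimage continuous_subtype_val
  -- the kernel part
  haveI : CompactSpace ↥U₀ := isCompact_iff_compactSpace.mp hU₀cpt
  haveI : CompactSpace ↥M := isCompact_iff_compactSpace.mp hMc.isCompact
  have hmemO₀ : ∀ x : ↥M, ((x : ↥W) : G) ∈ O₀ := fun x => (hWsub (x : ↥W).2).1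
  have hmemN : ∀ x : ↥M, ((x : ↥W) : G) ∈ N := fun x => Subgroup.mem_subgroupOf.mp x.2
  have hmemU₀ : ∀ x : ↥M, (⟨((x : ↥W) : G), hmemN x⟩ : ↥N) ∈ U₀ := by
    intro x
    have : (⟨((x : ↥W) : G), hmemN x⟩ : ↥N) ∈ Subtype.val ⁻¹' O₀ := hmemO₀ x
    rw [hO₀pre] at this
    exact this
  let f₁ : ↥M →* ↥U₀ :=
    { toFun := fun x => ⟨⟨((x : ↥W) : G), hmemN x⟩, hmemU₀ x⟩
      map_one' := by apply Subtype.ext; apply Subtype.ext; rfl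
      map_mul' := fun a b => by apply Subtype.ext; apply Subtype.ext; rfl }
  have hf₁c : Continuous f₁ := by
    apply Continuous.subtype_mk
    apply Continuous.subtype_mk
    exact continuous_subtype_val.comp continuous_subtype_val
  have hf₁i : Function.Injective f₁ := by
    intro a b hab
    apply Subtype.ext
    apply Subtype.ext
    exact congrArg (fun y : ↥U₀ => ((y : ↥N) : G)) hab
  have hM : IsProPOfFiniteRank p ↥M := prop_comap hp hU₀prop f₁ hf₁c hf₁i
  -- the quotient part
  have hmemP : ∀ w : ↥W, QuotientGroup.mk' N (w : G) ∈ V := fun w => (hWsub w.2).2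
  let g : ↥W →* ↥V := ((QuotientGroup.mk' N).comp W.subtype).codRestrict V (fun w => hmemP w)
  have hgc : Continuous g := by
    apply Continuous.subtype_mk
    exact QuotientGroup.continuous_mk.comp continuous_subtype_val
  have hgker : ∀ x : ↥W, x ∈ M → g x = 1 := by
    intro x hx
    apply Subtype.ext
    show QuotientGroup.mk' N (x : G) = 1
    rw [QuotientGroup.mk'_apply, QuotientGroup.eq_one_iff]
    exact Subgroup.mem_subgroupOf.mp hx
  let f₂ : (↥W ⧸ M) →* ↥V := QuotientGroup.lift M g (fun x hx => hgker x hx)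
  have hf₂c : Continuous f₂ := by
    rw [(QuotientGroup.isQuotientMap_mk M).continuous_iff]
    exact hgc
  have hf₂i : Function.Injective f₂ := by
    rw [injective_iff_map_eq_one]
    intro a
    induction a using QuotientGroup.induction_on with
    | H w =>
      intro hw
      have : g w = 1 := hw
      have hval : QuotientGroup.mk' N (w : G) = 1 := congrArg Subtype.val this
      rw [QuotientGroup.mk'_apply, QuotientGroup.eq_one_iff] at hval
      rw [QuotientGroup.eq_one_iff]
      exact Subgroup.mem_subgroupOf.mpr hval
  haveI : CompactSpace ↥V := isCompact_iff_compactSpace.mp hVcpt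
  have hQ' : IsProPOfFiniteRank p (↥W ⧸ M) := prop_comap hp hVprop f₂ hf₂c hf₂i
  exact prop_extension M hMc hM hQ'
end

section
/- Let (G,α) be a totally disconnected locally compact contraction group, A ⊆ G a central α-stable closed subgroup with A ≅ ℚ_p^d, such that G/A is isomorphic (as a contraction group) to the restricted product F^(−ℕ) × F^ℕ₀ with the right shift, for a finite group F. Then tor(G) is a closed subgroup of G and G = A × tor(G) internally as a topological group. -/
open Filter Topology

/-- The restricted product `F^(−ℕ) × F^ℕ₀`: all `f : ℤ → F` with only finitely
many nontrivial coordinates at negative positions. -/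
def restrictedProd (F : Type*) [Group F] : Subgroup (ℤ → F) where
  carrier := {f | {n : ℤ | n < 0 ∧ f n ≠ 1}.Finite}
  one_mem' := by simp
  mul_mem' := by
    intro a b ha hb
    apply (ha.union hb).subset
    rintro n ⟨hneg, hne⟩
    rcases eq_or_ne (a n) 1 with h1 | h1
    · exact Or.inr ⟨hneg, fun h2 => hne (by simp [Pi.mul_apply, h1, h2])⟩
    · exact Or.inl ⟨hneg, h1⟩
  inv_mem' := by
    intro a ha
    apply ha.subset
    rintro n ⟨hneg, hne⟩
    exact ⟨hneg, fun h => hne (by simp [Pi.inv_apply, h])⟩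

lemma shift_mem_restrictedProd (F : Type*) [Group F]
    (f : ℤ → F) (hf : f ∈ restrictedProd F) :
    (fun n : ℤ => f (n - 1)) ∈ restrictedProd F := by
  apply (hf.image (· + 1)).subset
  rintro n ⟨hneg, hne⟩
  exact ⟨n - 1, ⟨by omega, hne⟩, by ring⟩

lemma unshift_mem_restrictedProd (F : Type*) [Group F]
    (f : ℤ → F) (hf : f ∈ restrictedProd F) :
    (fun n : ℤ => f (n + 1)) ∈ restrictedProd F := by
  apply ((hf.image (· - 1)).union (Set.finite_singleton (-1))).subset
  rintro n ⟨hneg, hne⟩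
  rcases eq_or_ne n (-1) with h | h
  · exact Or.inr h
  · exact Or.inl ⟨n + 1, ⟨by omega, hne⟩, by ring⟩

/-- The right shift on the restricted product. -/
def shiftR (F : Type*) [Group F] : MulAut (restrictedProd F) where
  toFun f := ⟨fun n => (f : ℤ → F) (n - 1), shift_mem_restrictedProd F _ f.2⟩
  invFun f := ⟨fun n => (f : ℤ → F) (n + 1), unshift_mem_restrictedProd F _ f.2⟩
  left_inv f := Subtype.ext (funext fun n => by simp)
  right_inv f := Subtype.ext (funext fun n => by simp)
  map_mul' a b := Subtype.ext rfl

section auxlemmas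

/-- Product of torsion elements is torsion, in a group with a central torsion-free
subgroup such that the images in the quotient lie in a finite subgroup.
Proved via the transfer homomorphism. -/
lemma torsion_mul_torsion {G : Type*} [Group G] (A : Subgroup G) [A.Normal]
    (hcent : A ≤ Subgroup.center G)
    (htf : ∀ a : G, a ∈ A → IsOfFinOrder a → a = 1)
    (Δ : Subgroup (G ⧸ A)) (hΔ : Finite Δ)
    (x y : G) (hx : IsOfFinOrder x) (hy : IsOfFinOrder y)
    (hxΔ : (QuotientGroup.mk x : G ⧸ A) ∈ Δ) (hyΔ : (QuotientGroup.mk y : G ⧸ A) ∈ Δ) :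
    IsOfFinOrder (x * y) := by
  classical
  set K : Subgroup G := Δ.comap (QuotientGroup.mk' A) with hKdef
  have hxK : x ∈ K := by simpa [hKdef, Subgroup.mem_comap] using hxΔ
  have hyK : y ∈ K := by simpa [hKdef, Subgroup.mem_comap] using hyΔ
  set H : Subgroup ↥K := A.subgroupOf K with hHdef
  -- finite index of H in K
  let f : ↥K →* ↥Δ :=
    ((QuotientGroup.mk' A).comp K.subtype).codRestrict Δ
      (fun k => Subgroup.mem_comap.mp k.2)
  have hker : f.ker = H := by
    ext k
    simp only [MonoidHom.mem_ker, f]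
    constructor
    · intro h
      have h2 : (QuotientGroup.mk' A) (k : G) = 1 := congrArg Subtype.val h
      have h3 : (k : G) ∈ A := (QuotientGroup.eq_one_iff _).mp h2
      exact Subgroup.mem_subgroupOf.mpr h3
    · intro h
      have h3 : (k : G) ∈ A := Subgroup.mem_subgroupOf.mp h
      exact Subtype.ext ((QuotientGroup.eq_one_iff _).mpr h3)
  haveI : Finite (↥K ⧸ H) := by
    rw [← hker]
    exact Finite.of_equiv _ (QuotientGroup.quotientKerEquivRange f).symm.toEquiv
  haveI hFI : H.FiniteIndex := Subgroup.finiteIndex_of_finite_quotient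
  -- commutativity of H
  have hHcomm : ∀ a b : ↥H, a * b = b * a := by
    intro a b
    have hbA : ((b : ↥K) : G) ∈ A := Subgroup.mem_subgroupOf.mp b.2
    have := Subgroup.mem_center_iff.mp (hcent hbA) ((a : ↥K) : G)
    exact Subtype.ext (Subtype.ext this)
  letI : CommGroup ↥H := { (inferInstance : Group ↥H) with mul_comm := hHcomm }
  let ϕ : ↥H →* ↥H := MonoidHom.id ↥H
  -- key hypothesis for transfer_eq_pow
  have hkey : ∀ (g : ↥K) (k : ℕ) (g₀ : ↥K),
      g₀⁻¹ * g ^ k * g₀ ∈ H → g₀⁻¹ * g ^ k * g₀ = g ^ k := by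
    intro g k g₀ h
    have hA : ((g₀⁻¹ * g ^ k * g₀ : ↥K) : G) ∈ A := Subgroup.mem_subgroupOf.mp h
    have hcen := Subgroup.mem_center_iff.mp (hcent hA) ((g₀ : G))
    -- hcen : ↑g₀ * (↑(g₀⁻¹ * g^k * g₀)) = (↑(g₀⁻¹ * g^k * g₀)) * ↑g₀
    apply Subtype.ext
    push_cast at hcen ⊢
    have h2 : (g : G) ^ k * (g₀ : G) =
        ((g₀ : G)⁻¹ * (g : G) ^ k * (g₀ : G)) * (g₀ : G) := by
      calc (g : G) ^ k * (g₀ : G)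
          = (g₀ : G) * ((g₀ : G)⁻¹ * (g : G) ^ k * (g₀ : G)) := by group
        _ = ((g₀ : G)⁻¹ * (g : G) ^ k * (g₀ : G)) * (g₀ : G) := hcen
    exact (mul_right_cancel h2).symm
  set M := H.index with hM
  have hM0 : M ≠ 0 := hFI.index_ne_zero
  -- torsion elements of K have trivial transfer
  have hpow_mem : ∀ g : ↥K, g ^ M ∈ H := fun g =>
    MonoidHom.transfer_eq_pow_aux g (hkey g)
  have htriv : ∀ g : ↥K, IsOfFinOrder ((g : G)) → g ^ M = 1 := by
    intro g hg
    have h1 : ((g : G)) ^ M ∈ A := Subgroup.mem_subgroupOf.mp (hpow_mem g)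
    have h2 : ((g : G)) ^ M = 1 := htf _ h1 (hg.pow)
    exact Subtype.ext (by push_cast; exact h2)
  set x' : ↥K := ⟨x, hxK⟩ with hx'
  set y' : ↥K := ⟨y, hyK⟩ with hy'
  have hVx : ϕ.transfer x' = 1 := by
    rw [MonoidHom.transfer_eq_pow ϕ x' (hkey x')]
    have : x' ^ M = 1 := htriv x' hx
    exact Subtype.ext (by simp [ϕ, ← hM, this])
  have hVy : ϕ.transfer y' = 1 := by
    rw [MonoidHom.transfer_eq_pow ϕ y' (hkey y')]
    have : y' ^ M = 1 := htriv y' hy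
    exact Subtype.ext (by simp [ϕ, ← hM, this])
  have hVxy : ϕ.transfer (x' * y') = 1 := by rw [map_mul, hVx, hVy, one_mul]
  rw [MonoidHom.transfer_eq_pow ϕ (x' * y') (hkey (x' * y'))] at hVxy
  have h1 : (x' * y') ^ M = 1 := by
    have := congrArg (fun z : ↥H => ((z : ↥K))) hVxy
    simpa [ϕ] using this
  have h2 : (x * y) ^ M = 1 := by
    have := congrArg (fun z : ↥K => (z : G)) h1
    push_cast at this
    simpa using this
  exact isOfFinOrder_iff_pow_eq_one.mpr ⟨M, Nat.pos_of_ne_zero hM0, h2⟩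

end auxlemmas

/-- A subgroup of a group isomorphic to a subgroup of `ℤ → F`, `F` finite,
generated by two elements, is finite. -/
lemma finite_closure_pair {F : Type*} [Group F] [Fintype F] {Q : Type*} [Group Q]
    (ψ : Q ≃* restrictedProd F) (x y : Q) :
    Finite (Subgroup.closure ({x, y} : Set Q)) := by
  classical
  set c : ℤ → F × F := fun n =>
    (((ψ x : restrictedProd F) : ℤ → F) n, ((ψ y : restrictedProd F) : ℤ → F) n) with hc
  have hP : ∀ g ∈ Subgroup.closure ({x, y} : Set Q), ∀ n m : ℤ, c n = c m →
      ((ψ g : restrictedProd F) : ℤ → F) n = ((ψ g : restrictedProd F) : ℤ → F) m := by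
    intro g hg
    induction hg using Subgroup.closure_induction with
    | mem z hz =>
      intro n m hnm
      rcases hz with rfl | rfl
      · exact congrArg Prod.fst hnm
      · exact congrArg Prod.snd hnm
    | one => intro n m _; simp
    | mul a b _ _ ha hb =>
      intro n m hnm
      simp only [map_mul]
      have h1 : ((ψ a * ψ b : restrictedProd F) : ℤ → F) n =
          ((ψ a : restrictedProd F) : ℤ → F) n * ((ψ b : restrictedProd F) : ℤ → F) n := rfl
      have h2 : ((ψ a * ψ b : restrictedProd F) : ℤ → F) m =
          ((ψ a : restrictedProd F) : ℤ → F) m * ((ψ b : restrictedProd F) : ℤ → F) m := rfl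
      rw [h1, h2, ha n m hnm, hb n m hnm]
    | inv a _ ha =>
      intro n m hnm
      simp only [map_inv]
      have h1 : (((ψ a)⁻¹ : restrictedProd F) : ℤ → F) n =
          (((ψ a : restrictedProd F) : ℤ → F) n)⁻¹ := rfl
      have h2 : (((ψ a)⁻¹ : restrictedProd F) : ℤ → F) m =
          (((ψ a : restrictedProd F) : ℤ → F) m)⁻¹ := rfl
      rw [h1, h2, ha n m hnm]
  let T : ↥(Subgroup.closure ({x, y} : Set Q)) → (F × F → F) := fun g v =>
    if h : ∃ n, c n = v then ((ψ (g : Q) : restrictedProd F) : ℤ → F) h.choose else 1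
  have hTinj : Function.Injective T := by
    intro g g' hgg'
    apply Subtype.ext
    apply ψ.injective
    apply Subtype.ext
    funext n
    have hex : ∃ m, c m = c n := ⟨n, rfl⟩
    have hg1 : ((ψ (g : Q) : restrictedProd F) : ℤ → F) n = T g (c n) := by
      simp only [T, dif_pos hex]
      exact (hP (g : Q) g.2 hex.choose n hex.choose_spec).symm
    have hg2 : ((ψ (g' : Q) : restrictedProd F) : ℤ → F) n = T g' (c n) := by
      simp only [T, dif_pos hex]
      exact (hP (g' : Q) g'.2 hex.choose n hex.choose_spec).symm
    rw [hg1, hg2, hgg']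
  exact Finite.of_injective T hTinj

/-- Let `(G, α)` be a totally disconnected locally compact contraction group,
`A` a central `α`-stable closed subgroup isomorphic to `ℚ_p^d`, such that
`G/A` with the induced automorphism is isomorphic as a contraction group to
the restricted product `F^(−ℕ) × F^ℕ₀` with the right shift, `F` finite.
Then `tor(G)` is a closed subgroup and `G = A × tor(G)` internally as a
topological group. -/
theorem stmt19 (p : ℕ) [Fact p.Prime] (d : ℕ) (F : Type*) [Group F] [Fintype F]
    (G : Type*) [Group G] [TopologicalSpace G] [IsTopologicalGroup G]
    [LocallyCompactSpace G] [T2Space G] [TotallyDisconnectedSpace G]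
    (α : MulAut G) (hc : Continuous α) (hc' : Continuous α.symm)
    (hcontr : ∀ x : G, Tendsto (fun n : ℕ => (α ^ n) x) atTop (𝓝 1))
    (A : Subgroup G) [A.Normal] (hAcentral : A ≤ Subgroup.center G)
    (hAclosed : IsClosed (A : Set G))
    (hAstable : ⇑α '' (A : Set G) = (A : Set G))
    (e : A ≃* Multiplicative (Fin d → ℚ_[p]))
    (he : Continuous e) (he' : Continuous e.symm)
    [TopologicalSpace (restrictedProd F)] [IsTopologicalGroup (restrictedProd F)]
    (hbasis : (𝓝 (1 : restrictedProd F)).HasBasis (fun _ : ℤ => True)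
      (fun k => {f : restrictedProd F | ∀ n : ℤ, n < k → (f : ℤ → F) n = 1}))
    (ψ : (G ⧸ A) ≃* restrictedProd F)
    (hψ : Continuous ψ) (hψ' : Continuous ψ.symm)
    (hint : ∀ g : G,
      ψ ((α g : G) : G ⧸ A) = shiftR F (ψ ((g : G) : G ⧸ A))) :
    ∃ T : Subgroup G,
      (T : Set G) = {x : G | IsOfFinOrder x} ∧
      IsClosed (T : Set G) ∧
      A ⊓ T = ⊥ ∧ A ⊔ T = ⊤ ∧
      Function.Bijective (fun q : A × T => (q.1 : G) * (q.2 : G)) ∧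
      Continuous (fun q : A × T => (q.1 : G) * (q.2 : G)) ∧
      IsOpenMap (fun q : A × T => (q.1 : G) * (q.2 : G)) := by
  classical
  set N := Fintype.card F with hNdef
  have hNpos : 0 < N := Fintype.card_pos
  -- A is torsion-free
  have htf : ∀ a : G, a ∈ A → IsOfFinOrder a → a = 1 := by
    intro a ha hfin
    obtain ⟨n, hn, hpow⟩ := isOfFinOrder_iff_pow_eq_one.mp hfin
    have h1 : (⟨a, ha⟩ : A) ^ n = 1 := by
      apply Subtype.ext; push_cast; exact hpow
    have h2 : (e ⟨a, ha⟩) ^ n = 1 := by rw [← map_pow, h1, map_one]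
    have h3 : n • Multiplicative.toAdd (e ⟨a, ha⟩) = 0 := by
      rw [← toAdd_pow, h2]; rfl
    have h4 : Multiplicative.toAdd (e ⟨a, ha⟩) = 0 := by
      funext i
      have h5 := congrFun h3 i
      simp only [Pi.smul_apply, Pi.zero_apply, nsmul_eq_mul] at h5
      have h6 : (n : ℚ_[p]) ≠ 0 := Nat.cast_ne_zero.mpr hn.ne'
      exact (mul_eq_zero.mp h5).resolve_left h6
    have h7 : e ⟨a, ha⟩ = 1 := by
      have : e ⟨a, ha⟩ = Multiplicative.ofAdd 0 := by
        rw [← h4]; rfl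
      simpa using this
    have h8 : (⟨a, ha⟩ : A) = 1 := by
      apply e.injective; rw [h7, map_one]
    exact congrArg Subtype.val h8
  -- every N-th power lies in A
  have hpowN : ∀ g : G, g ^ N ∈ A := by
    intro g
    have h1 : (ψ (QuotientGroup.mk g : G ⧸ A)) ^ N = 1 := by
      apply Subtype.ext
      funext n
      have : ((ψ (QuotientGroup.mk g : G ⧸ A)) ^ N : restrictedProd F).val n =
          (((ψ (QuotientGroup.mk g : G ⧸ A)) : ℤ → F) n) ^ N := rfl
      rw [this, hNdef, pow_card_eq_one]
      rfl
    have h2 : (QuotientGroup.mk g : G ⧸ A) ^ N = 1 := by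
      apply ψ.injective
      rw [map_pow, h1, map_one]
    have h3 : (QuotientGroup.mk (g ^ N) : G ⧸ A) = 1 := by
      rw [← h2]; rfl
    exact (QuotientGroup.eq_one_iff _).mp h3
  -- torsion iff N-th power trivial
  have hTiff : ∀ g : G, IsOfFinOrder g ↔ g ^ N = 1 := by
    intro g
    constructor
    · intro hg; exact htf _ (hpowN g) hg.pow
    · intro hg; exact isOfFinOrder_iff_pow_eq_one.mpr ⟨N, hNpos, hg⟩
  -- the torsion subgroup
  let T : Subgroup G :=
    { carrier := {x : G | IsOfFinOrder x}
      one_mem' := IsOfFinOrder.one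
      inv_mem' := fun {a} ha => ha.inv
      mul_mem' := by
        intro a b ha hb
        have hfin := finite_closure_pair ψ (QuotientGroup.mk a : G ⧸ A)
          (QuotientGroup.mk b : G ⧸ A)
        exact torsion_mul_torsion A hAcentral htf _ hfin a b ha hb
          (Subgroup.subset_closure (Set.mem_insert _ _))
          (Subgroup.subset_closure (Set.mem_insert_of_mem _ rfl)) }
  -- elements of A are central
  have hcomm : ∀ (a : A) (g : G), g * (a : G) = (a : G) * g := fun a g =>
    Subgroup.mem_center_iff.mp (hAcentral a.2) g
  -- N-th roots in A
  have hNQ : ((N : ℚ_[p])) ≠ 0 := Nat.cast_ne_zero.mpr hNpos.ne'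
  let root : A → A := fun a =>
    e.symm (Multiplicative.ofAdd ((N : ℚ_[p])⁻¹ • Multiplicative.toAdd (e a)))
  have hroot : ∀ a : A, (root a) ^ N = a := by
    intro a
    apply e.injective
    rw [map_pow, MulEquiv.apply_symm_apply]
    have h1 : (Multiplicative.ofAdd ((N : ℚ_[p])⁻¹ • Multiplicative.toAdd (e a))) ^ N =
        Multiplicative.ofAdd (N • ((N : ℚ_[p])⁻¹ • Multiplicative.toAdd (e a))) := by
      apply Multiplicative.toAdd.injective
      rw [toAdd_pow]
      rfl
    rw [h1, ← Nat.cast_smul_eq_nsmul ℚ_[p], smul_smul, mul_inv_cancel₀ hNQ, one_smul]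
    simp
  let bmap : G → A := fun g => root ⟨g ^ N, hpowN g⟩
  have hb : ∀ g : G, ((bmap g : G)) ^ N = g ^ N := by
    intro g
    have h := congrArg Subtype.val (hroot ⟨g ^ N, hpowN g⟩)
    push_cast at h
    exact h
  let tmap : G → G := fun g => g * (bmap g : G)⁻¹
  have hcommute : ∀ g : G, Commute g ((bmap g : G)) := fun g => hcomm (bmap g) g
  have ht : ∀ g : G, (tmap g) ^ N = 1 := by
    intro g
    have h1 : (tmap g) ^ N = g ^ N * ((bmap g : G)⁻¹) ^ N :=
      ((hcommute g).inv_right).mul_pow N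
    rw [h1, inv_pow, hb, mul_inv_cancel]
  have htT : ∀ g : G, tmap g ∈ T := fun g => (hTiff _).mpr (ht g)
  have hfact : ∀ g : G, (bmap g : G) * tmap g = g := by
    intro g
    show (bmap g : G) * (g * (bmap g : G)⁻¹) = g
    rw [← mul_assoc, ← hcomm (bmap g) g]
    group
  -- the multiplication map
  set mulmap : A × T → G := fun q => (q.1 : G) * (q.2 : G) with hmul
  have hTset : (T : Set G) = {x : G | IsOfFinOrder x} := rfl
  -- injectivity
  have hinj : Function.Injective mulmap := by
    rintro ⟨a, t⟩ ⟨a', t'⟩ h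
    simp only [hmul] at h
    have h1 : (a' : G)⁻¹ * (a : G) = (t' : G) * (t : G)⁻¹ := by
      have h0 := congrArg (fun z : G => (a' : G)⁻¹ * z * (t : G)⁻¹) h
      simpa [mul_assoc] using h0
    have h2 : (a' : G)⁻¹ * (a : G) ∈ A := A.mul_mem (A.inv_mem a'.2) a.2
    have h3 : IsOfFinOrder ((a' : G)⁻¹ * (a : G)) := by
      rw [h1]
      exact T.mul_mem t'.2 (T.inv_mem t.2)
    have h4 : (a' : G)⁻¹ * (a : G) = 1 := htf _ h2 h3
    have h5 : (a : G) = (a' : G) := by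
      rw [inv_mul_eq_one] at h4; exact h4.symm
    have h6 : (t : G) = (t' : G) := by
      have := h
      rw [h5] at this
      exact mul_left_cancel this
    exact Prod.ext (Subtype.ext h5) (Subtype.ext h6)
  have hsurj : Function.Surjective mulmap := by
    intro g
    exact ⟨(bmap g, ⟨tmap g, htT g⟩), hfact g⟩
  -- continuity of the inverse
  have hbcont : Continuous bmap := by
    have h1 : Continuous (fun g : G => (⟨g ^ N, hpowN g⟩ : A)) :=
      (continuous_pow N).subtype_mk _
    have h2 : Continuous (fun x : Multiplicative (Fin d → ℚ_[p]) =>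
        Multiplicative.ofAdd ((N : ℚ_[p])⁻¹ • Multiplicative.toAdd x)) :=
      continuous_ofAdd.comp ((continuous_const_smul _).comp continuous_toAdd)
    exact he'.comp (h2.comp (he.comp h1))
  have htcont : Continuous (fun g : G => (⟨tmap g, htT g⟩ : T)) := by
    apply Continuous.subtype_mk
    exact continuous_id.mul ((continuous_subtype_val.comp hbcont).inv)
  set invmap : G → A × T := fun g => (bmap g, ⟨tmap g, htT g⟩) with hinvdef
  have hinvcont : Continuous invmap := hbcont.prodMk htcont
  have hright : ∀ g : G, mulmap (invmap g) = g := fun g => hfact g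
  have hleft : ∀ q : A × T, invmap (mulmap q) = q := by
    intro q
    apply hinj
    rw [hright]
  refine ⟨T, hTset, ?_, ?_, ?_, ⟨hinj, hsurj⟩, ?_, ?_⟩
  · -- closed
    have : (T : Set G) = (fun x : G => x ^ N) ⁻¹' {1} := by
      ext g
      simp only [hTset, Set.mem_setOf_eq, Set.mem_preimage, Set.mem_singleton_iff]
      exact hTiff g
    rw [this]
    exact isClosed_singleton.preimage (continuous_pow N)
  · -- A ⊓ T = ⊥
    rw [eq_bot_iff]
    intro g hg
    rw [Subgroup.mem_inf] at hg
    rw [Subgroup.mem_bot]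
    exact htf g hg.1 hg.2
  · -- A ⊔ T = ⊤
    rw [eq_top_iff]
    intro g _
    rw [← hfact g]
    exact Subgroup.mul_mem _ (Subgroup.mem_sup_left (bmap g).2)
      (Subgroup.mem_sup_right (htT g))
  · -- continuity
    exact (continuous_subtype_val.comp continuous_fst).mul
      (continuous_subtype_val.comp continuous_snd)
  · -- open map
    intro U hU
    have himg : mulmap '' U = invmap ⁻¹' U := by
      ext g
      constructor
      · rintro ⟨u, hu, rfl⟩
        simpa [Set.mem_preimage, hleft u] using hu
      · intro hg
        exact ⟨invmap g, hg, hright g⟩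
    rw [himg]
    exact hU.preimage hinvcont
end
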